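/- Fix m, l ∈ {1,…,n}. On the augmentation ideal of k[Y_∞^{(n)}] (the span of planar n-ary trees different from 1), define bilinear operations on basis trees s = λ(s_1,…,s_n) and t = λ(t_1,…,t_n) by s ≺ t = λ(s_1,…,s_{m−1}, s_m * t, s_{m+1},…,s_n) and s ≻ t = λ(t_1,…,t_{l−1}, s * t_l, t_{l+1},…,t_n), where * is the associative product with unit 1 determined by s * t = s ≺ t + s ≻ t on trees ≠ 1. Then (≺, ≻) make the augmentation ideal a dendriform algebra: for all a, b, c in the augmentation ideal, (a ≺ b) ≺ c = a ≺ (b ≺ c) + a ≺ (b ≻ c), a ≻ (b ≺ c) = (a ≻ b) ≺ c, and a ≻ (b ≻ c) = (a ≺ b) ≻ c + (a ≻ b) ≻ c; moreover both operations are graded with respect to the degree. -/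

import Mathlib

/- STATEMENT 13: the dendriform algebra structure on the augmentation ideal
of the span of planar n-ary trees. -/


inductive NTree (n : ℕ) : Type
  | leaf : NTree n
  | node : (Fin n → NTree n) → NTree n

namespace NTree

/-- the degree: the number of applications of `λ` (internal vertices). -/
noncomputable def deg {n : ℕ} (t : NTree n) : ℕ :=
  NTree.rec (motive := fun _ => ℕ) 0 (fun _ ih => 1 + ∑ i, ih i) t

theorem deg_node {n : ℕ} (f : Fin n → NTree n) : deg (node f) = 1 + ∑ i, deg (f i) := rfl

theorem deg_lt {n : ℕ} (f : Fin n → NTree n) (i : Fin n) : deg (f i) < deg (node f) := by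
  have h : deg (f i) ≤ ∑ j, deg (f j) :=
    Finset.single_le_sum (f := fun j => deg (f j)) (fun j _ => Nat.zero_le _) (Finset.mem_univ i)
  rw [deg_node]; omega

end NTree

noncomputable section
open Finsupp

variable {K : Type*} [Field K] {n : ℕ}

/-- replace the `i`-th subtree of a node by each term of a linear combination. -/
def nodeAt (f : Fin n → NTree n) (i : Fin n) (x : NTree n →₀ K) : NTree n →₀ K :=
  x.sum fun u c => Finsupp.single (NTree.node (Function.update f i u)) c

/-- the product on basis trees:
`1 * x = x = x * 1` and
`s * t = λ(s₁,…,sₘ*t,…,sₙ) + λ(t₁,…,s*t_l,…,tₙ)`. -/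
def mulT (m l : Fin n) : NTree n → NTree n → (NTree n →₀ K)
  | .leaf, t => Finsupp.single t 1
  | .node f, .leaf => Finsupp.single (NTree.node f) 1
  | .node f, .node g =>
      nodeAt f m (mulT m l (f m) (.node g)) + nodeAt g l (mulT m l (.node f) (g l))
  termination_by s t => NTree.deg s + NTree.deg t
  decreasing_by
    · have := NTree.deg_lt f m; omega
    · have := NTree.deg_lt g l; omega

def star (m l : Fin n) (x y : NTree n →₀ K) : NTree n →₀ K :=
  x.sum fun s a => y.sum fun t b => (a * b) • mulT m l s t
end

noncomputable section
open Finsupp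

variable {K : Type*} [Field K] {n : ℕ}

/-- `s ≺ t = λ(s₁,…,s_{m−1}, s_m * t, s_{m+1},…,sₙ)` on non-leaf basis
trees (junk value `0` if one of the arguments is the single-leaf tree). -/
def precT (m l : Fin n) : NTree n → NTree n → (NTree n →₀ K)
  | .node f, .node g => nodeAt f m (mulT m l (f m) (.node g))
  | _, _ => 0

/-- `s ≻ t = λ(t₁,…,t_{l−1}, s * t_l, t_{l+1},…,tₙ)` on non-leaf basis
trees. -/
def succT (m l : Fin n) : NTree n → NTree n → (NTree n →₀ K)
  | .node f, .node g => nodeAt g l (mulT m l (.node f) (g l))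
  | _, _ => 0

/-- bilinear extension of `≺`. -/
def precF (m l : Fin n) (x y : NTree n →₀ K) : NTree n →₀ K :=
  x.sum fun s a => y.sum fun t b => (a * b) • precT m l s t

/-- bilinear extension of `≻`. -/
def succF (m l : Fin n) (x y : NTree n →₀ K) : NTree n →₀ K :=
  x.sum fun s a => y.sum fun t b => (a * b) • succT m l s t

/-- the augmentation ideal: the span of the trees different from `1`. -/
def augIdeal (K : Type*) [Field K] (n : ℕ) : Submodule K (NTree n →₀ K) :=
  Submodule.span K {x | ∃ t : NTree n, t ≠ NTree.leaf ∧ x = Finsupp.single t 1}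

/-!
Write `∗`, `≺`, `≻` for the bilinear extensions of `mulT`, `precT`, `succT`. Grafting commutes
with them: `nodeAt f m x ≺ y = nodeAt f m (x ∗ y)` and `x ≻ nodeAt h l y = nodeAt h l (x ∗ y)`
for `y`, resp. `x`, in the augmentation ideal. So for trees `s`, `t`, `u ≠ 1` each term of
`(s ∗ t) ∗ u = (s ≺ t) ≺ u + (s ≻ t) ≺ u + (s ∗ t) ≻ u` is a grafting of a triple product of
smaller total degree, and associativity there turns the three terms into `s ≺ (t ∗ u)`,
`s ≻ (t ≺ u)` and `s ≻ (t ≻ u)`. This proves associativity of `∗` on trees by induction on the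
total degree, after which the same three equalities are the dendriform identities on trees. Since
`≺` and `≻` vanish as soon as an argument is the leaf, these hold for all trees and extend
trilinearly. Grafting adds degrees, which gives the grading.
-/

namespace Finsupp
variable {R α β N : Type*} [CommSemiring R] [AddCommMonoid N] [Module R N]

def linearCombination₂ (F : α → β → N) : (α →₀ R) →ₗ[R] (β →₀ R) →ₗ[R] N :=
  lsum R fun s => LinearMap.toSpanSingleton R _ (linearCombination R (F s))

@[simp] theorem linearCombination₂_single_single (F : α → β → N) (s : α) (t : β) (a b : R) :
    linearCombination₂ F (single s a) (single t b) = (a * b) • F s t := by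
  simp [linearCombination₂, mul_smul]

theorem linearCombination₂_apply (F : α → β → N) (x : α →₀ R) (y : β →₀ R) :
    linearCombination₂ F x y = x.sum fun s a => y.sum fun t b => (a * b) • F s t := by
  simp [linearCombination₂, lsum_apply, LinearMap.finsupp_sum_apply, linearCombination_apply,
    smul_sum, mul_smul]

end Finsupp

theorem LinearMap.eqOn_span₂ {R M N P : Type*} [CommSemiring R] [AddCommMonoid M] [Module R M]
    [AddCommMonoid N] [Module R N] [AddCommMonoid P] [Module R P]
    {B C : M →ₗ[R] N →ₗ[R] P} {s : Set M} {t : Set N} (h : ∀ x ∈ s, ∀ y ∈ t, B x y = C x y)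
    {x : M} {y : N} (hx : x ∈ Submodule.span R s) (hy : y ∈ Submodule.span R t) :
    B x y = C x y :=
  LinearMap.eqOn_span (f := B.flip y) (g := C.flip y)
    (fun x' hx' => LinearMap.eqOn_span (fun y' hy' => h x' hx' y' hy') hy) hx

open Finsupp Function NTree

theorem NTree.exists_eq_node {n : ℕ} {t : NTree n} (ht : t ≠ leaf) : ∃ f, t = node f := by
  cases t with
  | leaf => exact absurd rfl ht
  | node f => exact ⟨f, rfl⟩

theorem NTree.deg_node_update {n : ℕ} (f : Fin n → NTree n) (i : Fin n) (v : NTree n) :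
    deg (node (update f i v)) + deg (f i) = deg (node f) + deg v := by
  have hsum : ∑ j, deg (update f i v j) = ∑ j, update (fun j => deg (f j)) i (deg v) j :=
    Finset.sum_congr rfl fun j _ => by by_cases hj : j = i <;> simp [hj]
  rw [deg_node, deg_node, hsum, Finset.sum_update_of_mem (Finset.mem_univ i),
    Finset.sum_eq_add_sum_sdiff_singleton_of_mem (Finset.mem_univ i)]
  omega

noncomputable section

variable {K : Type*} [Field K] {n : ℕ} (m l : Fin n)

local notation "⌊" t "⌋" => Finsupp.single t (1 : K)

def nodeAtₗ (f : Fin n → NTree n) (i : Fin n) : (NTree n →₀ K) →ₗ[K] NTree n →₀ K :=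
  lmapDomain K K fun u => node (update f i u)

@[simp] theorem nodeAtₗ_apply (f : Fin n → NTree n) (i : Fin n) (x : NTree n →₀ K) :
    nodeAtₗ f i x = nodeAt f i x := rfl

@[simp] theorem nodeAt_zero (f : Fin n → NTree n) (i : Fin n) :
    nodeAt f i (0 : NTree n →₀ K) = 0 :=
  map_zero (nodeAtₗ f i)

@[simp] theorem nodeAt_add (f : Fin n → NTree n) (i : Fin n) (x y : NTree n →₀ K) :
    nodeAt f i (x + y) = nodeAt f i x + nodeAt f i y :=
  map_add (nodeAtₗ f i) x y

@[simp] theorem nodeAt_smul (f : Fin n → NTree n) (i : Fin n) (c : K) (x : NTree n →₀ K) :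
    nodeAt f i (c • x) = c • nodeAt f i x :=
  map_smul (nodeAtₗ f i) c x

@[simp] theorem nodeAt_single (f : Fin n → NTree n) (i : Fin n) (v : NTree n) (c : K) :
    nodeAt f i (single v c) = single (node (update f i v)) c :=
  mapDomain_single

@[simp] theorem nodeAt_update_self (f : Fin n → NTree n) (i : Fin n) (v : NTree n)
    (x : NTree n →₀ K) : nodeAt (update f i v) i x = nodeAt f i x := by
  simp only [← nodeAtₗ_apply, nodeAtₗ, Function.update_idem]

theorem single_mem_augIdeal {t : NTree n} (ht : t ≠ leaf) : ⌊t⌋ ∈ augIdeal K n :=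
  Submodule.subset_span ⟨t, ht, rfl⟩

theorem nodeAt_mem_augIdeal (f : Fin n → NTree n) (i : Fin n) (x : NTree n →₀ K) :
    nodeAt f i x ∈ augIdeal K n := by
  induction x using Finsupp.induction_linear with
  | zero => simp
  | add x y hx hy => simpa using add_mem hx hy
  | single v c =>
    simpa [nodeAt_single, smul_single_one] using
      Submodule.smul_mem _ c (single_mem_augIdeal (K := K) (t := node (update f i v)) nofun)

theorem exists_eq_node_update_of_mem_support_nodeAt {f : Fin n → NTree n} {i : Fin n}
    {x : NTree n →₀ K} {w : NTree n} (hw : w ∈ (nodeAt f i x).support) :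
    ∃ v ∈ x.support, w = node (update f i v) := by
  classical
  obtain ⟨v, hv, rfl⟩ := Finset.mem_image.mp (mapDomain_support hw)
  exact ⟨v, hv, rfl⟩

def nodeAt₂ (g : Fin n → NTree n) (i j : Fin n) :
    (NTree n →₀ K) →ₗ[K] (NTree n →₀ K) →ₗ[K] NTree n →₀ K :=
  linearCombination₂ fun v w => ⌊node (update (update g i v) j w)⌋

theorem nodeAt_update (g : Fin n → NTree n) (i j : Fin n) (v : NTree n) (y : NTree n →₀ K) :
    nodeAt (update g i v) j y = nodeAt₂ g i j ⌊v⌋ y :=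
  LinearMap.congr_fun (f := nodeAtₗ (update g i v) j) (by ext; simp [nodeAt₂]) y

theorem nodeAt₂_flip (g : Fin n → NTree n) {i j : Fin n} (hij : i ≠ j) :
    (nodeAt₂ (K := K) g i j).flip = nodeAt₂ g j i := by
  ext; simp [nodeAt₂, update_comm hij]

@[simp] theorem mulT_leaf_left (t : NTree n) : mulT (K := K) m l leaf t = single t 1 := by
  simp [mulT]

@[simp] theorem mulT_leaf_right (s : NTree n) : mulT (K := K) m l s leaf = single s 1 := by
  cases s <;> simp [mulT]

theorem mulT_node_node (f g : Fin n → NTree n) :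
    mulT (K := K) m l (node f) (node g) =
      precT m l (node f) (node g) + succT m l (node f) (node g) := by
  rw [mulT]; rfl

theorem precT_node_node (f g : Fin n → NTree n) :
    precT (K := K) m l (node f) (node g) = nodeAt f m (mulT m l (f m) (node g)) := rfl

theorem succT_node_node (f g : Fin n → NTree n) :
    succT (K := K) m l (node f) (node g) = nodeAt g l (mulT m l (node f) (g l)) := rfl

def mulₗ : (NTree n →₀ K) →ₗ[K] (NTree n →₀ K) →ₗ[K] NTree n →₀ K :=
  linearCombination₂ (mulT m l)
def precₗ : (NTree n →₀ K) →ₗ[K] (NTree n →₀ K) →ₗ[K] NTree n →₀ K :=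
  linearCombination₂ (precT m l)
def succₗ : (NTree n →₀ K) →ₗ[K] (NTree n →₀ K) →ₗ[K] NTree n →₀ K :=
  linearCombination₂ (succT m l)

local infixl:70 " ∗ " => mulₗ m l
local infixl:70 " ≺ " => precₗ m l
local infixl:70 " ≻ " => succₗ m l

@[simp] theorem mulₗ_single_single (s t : NTree n) (a b : K) :
    single s a ∗ single t b = (a * b) • mulT m l s t :=
  linearCombination₂_single_single _ s t a b

@[simp] theorem precₗ_single_single (s t : NTree n) (a b : K) :
    single s a ≺ single t b = (a * b) • precT m l s t :=
  linearCombination₂_single_single _ s t a b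

@[simp] theorem succₗ_single_single (s t : NTree n) (a b : K) :
    single s a ≻ single t b = (a * b) • succT m l s t :=
  linearCombination₂_single_single _ s t a b

@[simp] theorem single_leaf_mulₗ (x : NTree n →₀ K) : ⌊leaf⌋ ∗ x = x :=
  LinearMap.congr_fun (g := LinearMap.id) (by ext; simp) x

@[simp] theorem mulₗ_single_leaf (x : NTree n →₀ K) : x ∗ ⌊leaf⌋ = x :=
  LinearMap.congr_fun (f := (mulₗ m l).flip ⌊leaf⌋) (g := LinearMap.id) (by ext; simp) x

@[simp] theorem single_leaf_precₗ (x : NTree n →₀ K) : ⌊leaf⌋ ≺ x = 0 :=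
  LinearMap.congr_fun (g := 0) (by ext; simp [precT]) x

@[simp] theorem precₗ_single_leaf (x : NTree n →₀ K) : x ≺ ⌊leaf⌋ = 0 :=
  LinearMap.congr_fun (f := (precₗ m l).flip ⌊leaf⌋) (g := 0) (by ext; simp [precT]) x

@[simp] theorem single_leaf_succₗ (x : NTree n →₀ K) : ⌊leaf⌋ ≻ x = 0 :=
  LinearMap.congr_fun (g := 0) (by ext; simp [succT]) x

@[simp] theorem succₗ_single_leaf (x : NTree n →₀ K) : x ≻ ⌊leaf⌋ = 0 :=
  LinearMap.congr_fun (f := (succₗ m l).flip ⌊leaf⌋) (g := 0) (by ext; simp [succT]) x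

theorem precₗ_nodeAt_left (f : Fin n → NTree n) (x : NTree n →₀ K) {y : NTree n →₀ K}
    (hy : y ∈ augIdeal K n) : nodeAt f m x ≺ y = nodeAt f m (x ∗ y) := by
  refine LinearMap.eqOn_span (f := precₗ m l (nodeAt f m x)) (g := nodeAtₗ f m ∘ₗ mulₗ m l x) ?_ hy
  rintro _ ⟨t, ht, rfl⟩
  obtain ⟨g, rfl⟩ := exists_eq_node ht
  induction x using Finsupp.induction_linear with
  | zero => simp
  | add x x' hx hx' => simp_all
  | single v c => simp [precT_node_node]

theorem succₗ_nodeAt_right (h : Fin n → NTree n) {x : NTree n →₀ K} (hx : x ∈ augIdeal K n)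
    (y : NTree n →₀ K) : x ≻ nodeAt h l y = nodeAt h l (x ∗ y) := by
  refine LinearMap.eqOn_span (f := (succₗ m l).flip (nodeAt h l y))
    (g := nodeAtₗ h l ∘ₗ (mulₗ m l).flip y) ?_ hx
  rintro _ ⟨s, hs, rfl⟩
  obtain ⟨f, rfl⟩ := exists_eq_node hs
  induction y using Finsupp.induction_linear with
  | zero => simp
  | add y y' hy hy' => simp_all
  | single w c => simp [succT_node_node]

theorem single_node_precₗ (f : Fin n → NTree n) {y : NTree n →₀ K} (hy : y ∈ augIdeal K n) :
    ⌊node f⌋ ≺ y = nodeAt f m (⌊f m⌋ ∗ y) := by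
  simpa using precₗ_nodeAt_left m l f ⌊f m⌋ hy

theorem succₗ_single_node (h : Fin n → NTree n) {x : NTree n →₀ K} (hx : x ∈ augIdeal K n) :
    x ≻ ⌊node h⌋ = nodeAt h l (x ∗ ⌊h l⌋) := by
  simpa using succₗ_nodeAt_right m l h hx ⌊h l⌋

theorem single_node_mem_augIdeal (f : Fin n → NTree n) : ⌊node f⌋ ∈ augIdeal K n :=
  single_mem_augIdeal nofun

theorem single_node_mulₗ_single_node_mem_augIdeal (f g : Fin n → NTree n) :
    ⌊node f⌋ ∗ ⌊node g⌋ ∈ augIdeal K n := by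
  simpa [mulT_node_node, precT_node_node, succT_node_node] using
    add_mem (nodeAt_mem_augIdeal _ _ _) (nodeAt_mem_augIdeal _ _ _)

theorem mulₗ_eq_precₗ_add_succₗ {x y : NTree n →₀ K} (hx : x ∈ augIdeal K n)
    (hy : y ∈ augIdeal K n) : x ∗ y = x ≺ y + x ≻ y := by
  refine LinearMap.eqOn_span₂ (C := precₗ m l + succₗ m l) ?_ hx hy
  rintro _ ⟨s, hs, rfl⟩ _ ⟨t, ht, rfl⟩
  obtain ⟨f, rfl⟩ := exists_eq_node hs
  obtain ⟨g, rfl⟩ := exists_eq_node ht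
  simp [mulT_node_node]

theorem nodeAt_precₗ_of_ne (g : Fin n → NTree n) {i : Fin n} (hi : m ≠ i) (x : NTree n →₀ K)
    {y : NTree n →₀ K} (hy : y ∈ augIdeal K n) :
    nodeAt g i x ≺ y = nodeAt₂ g i m x (⌊g m⌋ ∗ y) := by
  induction x using Finsupp.induction_linear with
  | zero => simp
  | add x x' hx hx' => simp_all
  | single v c =>
    rw [← smul_single_one, nodeAt_smul, map_smul, map_smul, LinearMap.smul_apply,
      LinearMap.smul_apply, nodeAt_single, single_node_precₗ m l _ hy, update_of_ne hi,
      nodeAt_update]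

theorem succₗ_nodeAt_of_ne (g : Fin n → NTree n) {j : Fin n} (hj : l ≠ j) {x : NTree n →₀ K}
    (hx : x ∈ augIdeal K n) (y : NTree n →₀ K) :
    x ≻ nodeAt g j y = nodeAt₂ g j l y (x ∗ ⌊g l⌋) := by
  induction y using Finsupp.induction_linear with
  | zero => simp
  | add y y' hy hy' => simp_all
  | single w c =>
    rw [← smul_single_one, nodeAt_smul, map_smul, map_smul, LinearMap.smul_apply,
      nodeAt_single, succₗ_single_node m l _ hx, update_of_ne hj, nodeAt_update]

theorem precₗ_precₗ_of_assoc (f g h : Fin n → NTree n)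
    (hassoc : (⌊f m⌋ ∗ ⌊node g⌋) ∗ ⌊node h⌋ = ⌊f m⌋ ∗ (⌊node g⌋ ∗ ⌊node h⌋)) :
    (⌊node f⌋ ≺ ⌊node g⌋) ≺ ⌊node h⌋ = ⌊node f⌋ ≺ (⌊node g⌋ ∗ ⌊node h⌋) := by
  rw [single_node_precₗ m l f (single_node_mem_augIdeal g),
    precₗ_nodeAt_left m l f _ (single_node_mem_augIdeal h), hassoc,
    single_node_precₗ m l f (single_node_mulₗ_single_node_mem_augIdeal m l g h)]

theorem succₗ_precₗ_of_assoc (f g h : Fin n → NTree n)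
    (hassoc : (⌊node f⌋ ∗ ⌊g l⌋) ∗ ⌊node h⌋ = ⌊node f⌋ ∗ (⌊g l⌋ ∗ ⌊node h⌋)) :
    (⌊node f⌋ ≻ ⌊node g⌋) ≺ ⌊node h⌋ = ⌊node f⌋ ≻ (⌊node g⌋ ≺ ⌊node h⌋) := by
  rw [succₗ_single_node m l g (single_node_mem_augIdeal f),
    single_node_precₗ m l g (single_node_mem_augIdeal h)]
  rcases eq_or_ne m l with rfl | hml
  · rw [precₗ_nodeAt_left m m g _ (single_node_mem_augIdeal h), hassoc,
      succₗ_nodeAt_right m m g (single_node_mem_augIdeal f)]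
  -- for `m ≠ l` both sides graft into two different branches of `g`
  · rw [nodeAt_precₗ_of_ne m l g hml _ (single_node_mem_augIdeal h),
      succₗ_nodeAt_of_ne m l g hml.symm (single_node_mem_augIdeal f), ← nodeAt₂_flip g hml.symm,
      LinearMap.flip_apply]

theorem succₗ_succₗ_of_assoc (f g h : Fin n → NTree n)
    (hassoc : (⌊node f⌋ ∗ ⌊node g⌋) ∗ ⌊h l⌋ = ⌊node f⌋ ∗ (⌊node g⌋ ∗ ⌊h l⌋)) :
    (⌊node f⌋ ∗ ⌊node g⌋) ≻ ⌊node h⌋ = ⌊node f⌋ ≻ (⌊node g⌋ ≻ ⌊node h⌋) := by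
  rw [succₗ_single_node m l h (single_node_mulₗ_single_node_mem_augIdeal m l f g), hassoc,
    ← succₗ_nodeAt_right m l h (single_node_mem_augIdeal f),
    ← succₗ_single_node m l h (single_node_mem_augIdeal g)]

theorem single_mulₗ_assoc : ∀ s t u : NTree n, (⌊s⌋ ∗ ⌊t⌋) ∗ ⌊u⌋ = ⌊s⌋ ∗ (⌊t⌋ ∗ ⌊u⌋)
  | leaf, t, u => by simp
  | node f, leaf, u => by simp
  | node f, node g, leaf => by simp
  | node f, node g, node h => by
    have split := @mulₗ_eq_precₗ_add_succₗ K _ n m l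
    have hf := single_node_mem_augIdeal (K := K) f
    have hg := single_node_mem_augIdeal (K := K) g
    have hh := single_node_mem_augIdeal (K := K) h
    have hfg := single_node_mulₗ_single_node_mem_augIdeal (K := K) m l f g
    have hgh := single_node_mulₗ_single_node_mem_augIdeal (K := K) m l g h
    calc (⌊node f⌋ ∗ ⌊node g⌋) ∗ ⌊node h⌋
        = (⌊node f⌋ ≺ ⌊node g⌋) ≺ ⌊node h⌋ + (⌊node f⌋ ≻ ⌊node g⌋) ≺ ⌊node h⌋
            + (⌊node f⌋ ∗ ⌊node g⌋) ≻ ⌊node h⌋ := by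
          rw [split hfg hh, split hf hg, map_add, LinearMap.add_apply]
      _ = ⌊node f⌋ ≺ (⌊node g⌋ ∗ ⌊node h⌋) + ⌊node f⌋ ≻ (⌊node g⌋ ≺ ⌊node h⌋)
            + ⌊node f⌋ ≻ (⌊node g⌋ ≻ ⌊node h⌋) := by
          rw [precₗ_precₗ_of_assoc m l f g h (single_mulₗ_assoc (f m) (node g) (node h)),
            succₗ_precₗ_of_assoc m l f g h (single_mulₗ_assoc (node f) (g l) (node h)),
            succₗ_succₗ_of_assoc m l f g h (single_mulₗ_assoc (node f) (node g) (h l))]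
      _ = ⌊node f⌋ ∗ (⌊node g⌋ ∗ ⌊node h⌋) := by
          rw [add_assoc, ← map_add, ← split hg hh, ← split hf hgh]
termination_by s t u => s.deg + t.deg + u.deg
decreasing_by
  all_goals first
    | have := deg_lt f m; omega
    | have := deg_lt g l; omega
    | have := deg_lt h l; omega

theorem precₗ_precₗ (a b c : NTree n →₀ K) : (a ≺ b) ≺ c = a ≺ (b ≺ c) + a ≺ (b ≻ c) := by
  suffices h : (precₗ (K := K) m l).compr₂ (precₗ m l) =
      (LinearMap.llcomp K _ _ _ ∘ₗ precₗ m l).compl₂ (precₗ m l + succₗ m l) by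
    simpa using congr($h a b c)
  ext s t u : 6
  obtain _ | f := s; · simp [precT]
  obtain _ | g := t; · simp [precT, succT]
  obtain _ | h := u; · simp [precT]
  simpa [← map_add, mulT_node_node] using
    precₗ_precₗ_of_assoc (K := K) m l f g h (single_mulₗ_assoc m l _ _ _)

theorem succₗ_precₗ (a b c : NTree n →₀ K) : a ≻ (b ≺ c) = (a ≻ b) ≺ c := by
  suffices h : (LinearMap.llcomp K _ _ _ ∘ₗ succₗ (K := K) m l).compl₂ (precₗ m l) =
      (succₗ m l).compr₂ (precₗ m l) by
    simpa using congr($h a b c)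
  ext s t u : 6
  obtain _ | f := s; · simp [succT]
  obtain _ | g := t; · simp [precT]
  obtain _ | h := u; · simp
  simpa using (succₗ_precₗ_of_assoc (K := K) m l f g h (single_mulₗ_assoc m l _ _ _)).symm

theorem succₗ_succₗ (a b c : NTree n →₀ K) : a ≻ (b ≻ c) = (a ≺ b) ≻ c + (a ≻ b) ≻ c := by
  suffices h : (LinearMap.llcomp K _ _ _ ∘ₗ succₗ (K := K) m l).compl₂ (succₗ m l) =
      (precₗ m l + succₗ m l).compr₂ (succₗ m l) by
    simpa using congr($h a b c)
  ext s t u : 6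
  obtain _ | f := s; · simp [precT, succT]
  obtain _ | g := t; · simp [succT]
  obtain _ | h := u; · simp [succT]
  simpa [mulT_node_node] using
    (succₗ_succₗ_of_assoc (K := K) m l f g h (single_mulₗ_assoc m l _ _ _)).symm

theorem precF_eq_precₗ (x y : NTree n →₀ K) : precF m l x y = x ≺ y :=
  (linearCombination₂_apply _ x y).symm

theorem succF_eq_succₗ (x y : NTree n →₀ K) : succF m l x y = x ≻ y :=
  (linearCombination₂_apply _ x y).symm

theorem deg_eq_of_mem_support_nodeAt {f : Fin n → NTree n} {i : Fin n} {x : NTree n →₀ K} {d : ℕ}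
    (hx : ∀ v ∈ x.support, deg v = d) {w : NTree n} (hw : w ∈ (nodeAt f i x).support) :
    deg w + deg (f i) = deg (node f) + d := by
  obtain ⟨v, hv, rfl⟩ := exists_eq_node_update_of_mem_support_nodeAt hw
  rw [deg_node_update, hx v hv]

theorem deg_eq_of_mem_support_mulT :
    ∀ (s t w : NTree n), w ∈ (mulT (K := K) m l s t).support → deg w = deg s + deg t
  | leaf, t, w, hw => by simp_all [deg]
  | node f, leaf, w, hw => by simp_all [deg]
  | node f, node g, w, hw => by
    classical
    rw [mulT_node_node, precT_node_node, succT_node_node] at hw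
    rcases Finset.mem_union.mp (support_add hw) with hw | hw
    · have := deg_eq_of_mem_support_nodeAt (deg_eq_of_mem_support_mulT (f m) (node g)) hw
      have := deg_lt f m
      omega
    · have := deg_eq_of_mem_support_nodeAt (deg_eq_of_mem_support_mulT (node f) (g l)) hw
      have := deg_lt g l
      omega
termination_by s t => deg s + deg t
decreasing_by
  · have := deg_lt f m; omega
  · have := deg_lt g l; omega

theorem deg_eq_of_mem_support_precT (s t w : NTree n) (hw : w ∈ (precT (K := K) m l s t).support) :
    deg w = deg s + deg t := by
  obtain _ | f := s; · simp [precT] at hw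
  obtain _ | g := t; · simp [precT] at hw
  have := deg_eq_of_mem_support_nodeAt (deg_eq_of_mem_support_mulT m l (f m) (node g)) hw
  have := deg_lt f m
  omega

theorem deg_eq_of_mem_support_succT (s t w : NTree n) (hw : w ∈ (succT (K := K) m l s t).support) :
    deg w = deg s + deg t := by
  obtain _ | f := s; · simp [succT] at hw
  obtain _ | g := t; · simp [succT] at hw
  have := deg_eq_of_mem_support_nodeAt (deg_eq_of_mem_support_mulT m l (node f) (g l)) hw
  have := deg_lt g l
  omega

end

theorem nary_dendriform
    {K : Type*} [Field K] {n : ℕ} (m l : Fin n) :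
    -- `*` is determined by `s * t = s ≺ t + s ≻ t` on trees ≠ 1
    (∀ s t : NTree n, s ≠ NTree.leaf → t ≠ NTree.leaf →
        mulT (K := K) m l s t = precT m l s t + succT m l s t) ∧
    -- the dendriform identities on the augmentation ideal
    (∀ a ∈ augIdeal K n, ∀ b ∈ augIdeal K n, ∀ c ∈ augIdeal K n,
        precF m l (precF m l a b) c
          = precF m l a (precF m l b c) + precF m l a (succF m l b c)) ∧
    (∀ a ∈ augIdeal K n, ∀ b ∈ augIdeal K n, ∀ c ∈ augIdeal K n,
        succF m l a (precF m l b c) = precF m l (succF m l a b) c) ∧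
    (∀ a ∈ augIdeal K n, ∀ b ∈ augIdeal K n, ∀ c ∈ augIdeal K n,
        succF m l a (succF m l b c)
          = succF m l (precF m l a b) c + succF m l (succF m l a b) c) ∧
    -- both operations are graded
    (∀ s t : NTree n, s ≠ NTree.leaf → t ≠ NTree.leaf →
        ∀ u ∈ (precT (K := K) m l s t).support,
          NTree.deg u = NTree.deg s + NTree.deg t) ∧
    (∀ s t : NTree n, s ≠ NTree.leaf → t ≠ NTree.leaf →
        ∀ u ∈ (succT (K := K) m l s t).support,
          NTree.deg u = NTree.deg s + NTree.deg t) := by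
  simp only [precF_eq_precₗ, succF_eq_succₗ]
  refine ⟨fun s t hs ht => ?_, fun a _ b _ c _ => precₗ_precₗ m l a b c,
    fun a _ b _ c _ => succₗ_precₗ m l a b c, fun a _ b _ c _ => succₗ_succₗ m l a b c,
    fun s t _ _ => deg_eq_of_mem_support_precT m l s t,
    fun s t _ _ => deg_eq_of_mem_support_succT m l s t⟩
  obtain ⟨f, rfl⟩ := exists_eq_node hs
  obtain ⟨g, rfl⟩ := exists_eq_node ht
  exact mulT_node_node m l f g
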